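/- arXiv:math/0502058 — 6 statements merged into one kernel-verified Lean document; each statement's English description precedes it below -/
import Mathlib

section
/- Let c : ℝ → ℝ be a smooth function with κ⁻¹ ≤ c(u) ≤ κ for all u ∈ ℝ, for some κ > 1. If u is a twice continuously differentiable solution of u_tt − c(u)(c(u)uₓ)ₓ = 0 on an open set Ω ⊂ ℝ², and R := u_t + c(u)uₓ, S := u_t − c(u)uₓ, then on Ω one has the balance laws (R²)_t − (c(u) R²)ₓ = (c'(u)/(2c(u)))(R²S − RS²) and (S²)_t + (c(u) S²)ₓ = −(c'(u)/(2c(u)))(R²S − RS²). -/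
open Real Topology Filter

/-- Partial derivative in the first variable (time `t`). -/
noncomputable def pd1 (f : ℝ → ℝ → ℝ) (t x : ℝ) : ℝ := deriv (fun s => f s x) t

/-- Partial derivative in the second variable (space `x`). -/
noncomputable def pd2 (f : ℝ → ℝ → ℝ) (t x : ℝ) : ℝ := deriv (fun y => f t y) x

private lemma lineT {f : ℝ × ℝ → ℝ} {f' : ℝ × ℝ →L[ℝ] ℝ} {t x : ℝ}
    (h : HasFDerivAt f f' (t, x)) :
    HasDerivAt (fun s => f (s, x)) (f' (1, 0)) t := by
  have := h.comp_hasDerivAt t (HasDerivAt.prodMk (hasDerivAt_id t) (hasDerivAt_const t x))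
  exact this

private lemma lineX {f : ℝ × ℝ → ℝ} {f' : ℝ × ℝ →L[ℝ] ℝ} {t x : ℝ}
    (h : HasFDerivAt f f' (t, x)) :
    HasDerivAt (fun y => f (t, y)) (f' (0, 1)) x := by
  have := h.comp_hasDerivAt x (HasDerivAt.prodMk (hasDerivAt_const x t) (hasDerivAt_id x))
  exact this

/-- for a `C²` solution of `u_tt = c(u)(c(u)u_x)_x` on an open set `Ω`,
with `R = u_t + c(u)u_x`, `S = u_t - c(u)u_x`, the balance laws
`(R²)_t - (c R²)_x = (c'/(2c))(R²S - RS²)` and `(S²)_t + (c S²)_x = -(c'/(2c))(R²S - RS²)`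
hold on `Ω`. -/
theorem stmt6
    (c : ℝ → ℝ) (κ : ℝ) (hκ : 1 < κ) (hc : ContDiff ℝ (⊤ : ℕ∞) c)
    (hcb : ∀ v : ℝ, κ⁻¹ ≤ c v ∧ c v ≤ κ)
    (Ω : Set (ℝ × ℝ)) (hΩ : IsOpen Ω)
    (u : ℝ → ℝ → ℝ)
    (hu : ContDiffOn ℝ 2 (fun pt : ℝ × ℝ => u pt.1 pt.2) Ω)
    (hpde : ∀ t x : ℝ, (t, x) ∈ Ω →
      pd1 (fun s y => pd1 u s y) t x
        = c (u t x) * pd2 (fun s y => c (u s y) * pd2 u s y) t x)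
    (R S : ℝ → ℝ → ℝ)
    (hR : ∀ t x : ℝ, R t x = pd1 u t x + c (u t x) * pd2 u t x)
    (hS : ∀ t x : ℝ, S t x = pd1 u t x - c (u t x) * pd2 u t x) :
    ∀ t x : ℝ, (t, x) ∈ Ω →
      pd1 (fun s y => R s y ^ 2) t x - pd2 (fun s y => c (u s y) * R s y ^ 2) t x
          = deriv c (u t x) / (2 * c (u t x))
              * (R t x ^ 2 * S t x - R t x * S t x ^ 2)
      ∧ pd1 (fun s y => S s y ^ 2) t x + pd2 (fun s y => c (u s y) * S s y ^ 2) t x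
          = - (deriv c (u t x) / (2 * c (u t x))
              * (R t x ^ 2 * S t x - R t x * S t x ^ 2)) := by
  intro t x hp
  have hc0 : c (u t x) ≠ 0 := by
    have h1 : (0:ℝ) < κ⁻¹ := inv_pos.mpr (lt_trans one_pos hκ)
    have h2 := (hcb (u t x)).1
    linarith
  have hΩn : Ω ∈ 𝓝 (t, x) := hΩ.mem_nhds hp
  have hFd : ∀ q ∈ Ω, DifferentiableAt ℝ (fun q : ℝ × ℝ => u q.1 q.2) q := fun q hq =>
    (hu.contDiffAt (hΩ.mem_nhds hq)).differentiableAt two_ne_zero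
  have hGd : DifferentiableAt ℝ (fderiv ℝ (fun q : ℝ × ℝ => u q.1 q.2)) (t, x) :=
    ((hu.contDiffAt hΩn).fderiv_right (m := 1) (by norm_num)).differentiableAt one_ne_zero
  have hG' : HasFDerivAt (fderiv ℝ (fun q : ℝ × ℝ => u q.1 q.2)) (fderiv ℝ (fderiv ℝ (fun q : ℝ × ℝ => u q.1 q.2)) (t, x)) (t, x) := hGd.hasFDerivAt
  have hsym : fderiv ℝ (fderiv ℝ (fun q : ℝ × ℝ => u q.1 q.2)) (t, x) (0, 1) (1, 0) = fderiv ℝ (fderiv ℝ (fun q : ℝ × ℝ => u q.1 q.2)) (t, x) (1, 0) (0, 1) := by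
    have hev : ∀ᶠ q in 𝓝 (t, x), HasFDerivAt (fun q : ℝ × ℝ => u q.1 q.2) (fderiv ℝ (fun q : ℝ × ℝ => u q.1 q.2) q) q := by
      filter_upwards [hΩn] with q hq using (hFd q hq).hasFDerivAt
    exact second_derivative_symmetric_of_eventually hev hG' _ _
  have hcD : ∀ v : ℝ, HasDerivAt c (deriv c v) v := fun v =>
    ((hc.differentiable (by simp)) v).hasDerivAt
  have hpd1u : ∀ s y : ℝ, (s, y) ∈ Ω →
      pd1 u s y = fderiv ℝ (fun q : ℝ × ℝ => u q.1 q.2) (s, y) (1, 0) := fun s y hq =>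
    (lineT (hFd _ hq).hasFDerivAt).deriv
  have hpd2u : ∀ s y : ℝ, (s, y) ∈ Ω →
      pd2 u s y = fderiv ℝ (fun q : ℝ × ℝ => u q.1 q.2) (s, y) (0, 1) := fun s y hq =>
    (lineX (hFd _ hq).hasFDerivAt).deriv
  have hGv : ∀ v : ℝ × ℝ, HasFDerivAt (fun q => fderiv ℝ (fun q : ℝ × ℝ => u q.1 q.2) q v)
      ((ContinuousLinearMap.apply ℝ ℝ v).comp (fderiv ℝ (fderiv ℝ (fun q : ℝ × ℝ => u q.1 q.2)) (t, x))) (t, x) :=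
    fun v => (ContinuousLinearMap.apply ℝ ℝ v).hasFDerivAt.comp (t, x) hG'
  have hT1 : HasDerivAt (fun s => fderiv ℝ (fun q : ℝ × ℝ => u q.1 q.2) (s, x) (1, 0)) (fderiv ℝ (fderiv ℝ (fun q : ℝ × ℝ => u q.1 q.2)) (t, x) (1, 0) (1, 0)) t := by
    simpa using lineT (hGv (1, 0))
  have hT2 : HasDerivAt (fun s => fderiv ℝ (fun q : ℝ × ℝ => u q.1 q.2) (s, x) (0, 1)) (fderiv ℝ (fderiv ℝ (fun q : ℝ × ℝ => u q.1 q.2)) (t, x) (1, 0) (0, 1)) t := by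
    simpa using lineT (hGv (0, 1))
  have hX1 : HasDerivAt (fun y => fderiv ℝ (fun q : ℝ × ℝ => u q.1 q.2) (t, y) (1, 0)) (fderiv ℝ (fderiv ℝ (fun q : ℝ × ℝ => u q.1 q.2)) (t, x) (0, 1) (1, 0)) x := by
    simpa using lineX (hGv (1, 0))
  have hX2 : HasDerivAt (fun y => fderiv ℝ (fun q : ℝ × ℝ => u q.1 q.2) (t, y) (0, 1)) (fderiv ℝ (fderiv ℝ (fun q : ℝ × ℝ => u q.1 q.2)) (t, x) (0, 1) (0, 1)) x := by
    simpa using lineX (hGv (0, 1))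
  have hTF : HasDerivAt (fun s => u s x) (fderiv ℝ (fun q : ℝ × ℝ => u q.1 q.2) (t, x) (1, 0)) t := lineT (hFd _ hp).hasFDerivAt
  have hXF : HasDerivAt (fun y => u t y) (fderiv ℝ (fun q : ℝ × ℝ => u q.1 q.2) (t, x) (0, 1)) x := lineX (hFd _ hp).hasFDerivAt
  have hTc : HasDerivAt (fun s => c (u s x)) (deriv c (u t x) * fderiv ℝ (fun q : ℝ × ℝ => u q.1 q.2) (t, x) (1, 0)) t := (hcD (u t x)).comp t hTF
  have hXc : HasDerivAt (fun y => c (u t y)) (deriv c (u t x) * fderiv ℝ (fun q : ℝ × ℝ => u q.1 q.2) (t, x) (0, 1)) x := (hcD (u t x)).comp x hXF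
  have hmemT : ∀ᶠ s in 𝓝 t, (s, x) ∈ Ω :=
    (continuous_id.prodMk continuous_const).continuousAt.eventually_mem hΩn
  have hmemX : ∀ᶠ y in 𝓝 x, (t, y) ∈ Ω :=
    (continuous_const.prodMk continuous_id).continuousAt.eventually_mem hΩn
  have E0 : pd1 (fun s y => pd1 u s y) t x = fderiv ℝ (fderiv ℝ (fun q : ℝ × ℝ => u q.1 q.2)) (t, x) (1, 0) (1, 0) := by
    have heq : (fun s => pd1 u s x) =ᶠ[𝓝 t] (fun s => fderiv ℝ (fun q : ℝ × ℝ => u q.1 q.2) (s, x) (1, 0)) := by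
      filter_upwards [hmemT] with s hs
      rw [hpd1u s x hs]
    show deriv (fun s => pd1 u s x) t = _
    rw [heq.deriv_eq]
    exact hT1.deriv
  have E2 : pd2 (fun s y => c (u s y) * pd2 u s y) t x = deriv c (u t x) * fderiv ℝ (fun q : ℝ × ℝ => u q.1 q.2) (t, x) (0, 1) * fderiv ℝ (fun q : ℝ × ℝ => u q.1 q.2) (t, x) (0, 1) + c (u t x) * fderiv ℝ (fderiv ℝ (fun q : ℝ × ℝ => u q.1 q.2)) (t, x) (0, 1) (0, 1) := by
    have heq : (fun y => c (u t y) * pd2 u t y) =ᶠ[𝓝 x]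
        (fun y => c (u t y) * fderiv ℝ (fun q : ℝ × ℝ => u q.1 q.2) (t, y) (0, 1)) := by
      filter_upwards [hmemX] with y hy
      rw [hpd2u t y hy]
    show deriv (fun y => c (u t y) * pd2 u t y) x = _
    rw [heq.deriv_eq]
    simpa [Pi.mul_def, Pi.add_def, Pi.sub_def, Pi.pow_def] using (hXc.mul hX2).deriv
  have hpdeq : fderiv ℝ (fderiv ℝ (fun q : ℝ × ℝ => u q.1 q.2)) (t, x) (1, 0) (1, 0) = c (u t x) * (deriv c (u t x) * fderiv ℝ (fun q : ℝ × ℝ => u q.1 q.2) (t, x) (0, 1) * fderiv ℝ (fun q : ℝ × ℝ => u q.1 q.2) (t, x) (0, 1) + c (u t x) * fderiv ℝ (fderiv ℝ (fun q : ℝ × ℝ => u q.1 q.2)) (t, x) (0, 1) (0, 1)) := by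
    have h := hpde t x hp
    rw [E0, E2] at h
    exact h
  have E3 : pd1 (fun s y => R s y ^ 2) t x
      = 2 * (fderiv ℝ (fun q : ℝ × ℝ => u q.1 q.2) (t, x) (1, 0) + c (u t x) * fderiv ℝ (fun q : ℝ × ℝ => u q.1 q.2) (t, x) (0, 1)) * (fderiv ℝ (fderiv ℝ (fun q : ℝ × ℝ => u q.1 q.2)) (t, x) (1, 0) (1, 0) + (deriv c (u t x) * fderiv ℝ (fun q : ℝ × ℝ => u q.1 q.2) (t, x) (1, 0) * fderiv ℝ (fun q : ℝ × ℝ => u q.1 q.2) (t, x) (0, 1) + c (u t x) * fderiv ℝ (fderiv ℝ (fun q : ℝ × ℝ => u q.1 q.2)) (t, x) (1, 0) (0, 1))) := by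
    have heq : (fun s => R s x ^ 2) =ᶠ[𝓝 t]
        (fun s => (fderiv ℝ (fun q : ℝ × ℝ => u q.1 q.2) (s, x) (1, 0) + c (u s x) * fderiv ℝ (fun q : ℝ × ℝ => u q.1 q.2) (s, x) (0, 1)) ^ 2) := by
      filter_upwards [hmemT] with s hs
      rw [hR s x, hpd1u s x hs, hpd2u s x hs]
    show deriv (fun s => R s x ^ 2) t = _
    rw [heq.deriv_eq]
    simpa [Pi.mul_def, Pi.add_def, Pi.sub_def, Pi.pow_def] using ((hT1.add (hTc.mul hT2)).pow 2).deriv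
  have E4 : pd2 (fun s y => c (u s y) * R s y ^ 2) t x
      = deriv c (u t x) * fderiv ℝ (fun q : ℝ × ℝ => u q.1 q.2) (t, x) (0, 1) * (fderiv ℝ (fun q : ℝ × ℝ => u q.1 q.2) (t, x) (1, 0) + c (u t x) * fderiv ℝ (fun q : ℝ × ℝ => u q.1 q.2) (t, x) (0, 1)) ^ 2
        + c (u t x) * (2 * (fderiv ℝ (fun q : ℝ × ℝ => u q.1 q.2) (t, x) (1, 0) + c (u t x) * fderiv ℝ (fun q : ℝ × ℝ => u q.1 q.2) (t, x) (0, 1)) * (fderiv ℝ (fderiv ℝ (fun q : ℝ × ℝ => u q.1 q.2)) (t, x) (0, 1) (1, 0) + (deriv c (u t x) * fderiv ℝ (fun q : ℝ × ℝ => u q.1 q.2) (t, x) (0, 1) * fderiv ℝ (fun q : ℝ × ℝ => u q.1 q.2) (t, x) (0, 1) + c (u t x) * fderiv ℝ (fderiv ℝ (fun q : ℝ × ℝ => u q.1 q.2)) (t, x) (0, 1) (0, 1)))) := by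
    have heq : (fun y => c (u t y) * R t y ^ 2) =ᶠ[𝓝 x]
        (fun y => c (u t y) *
          (fderiv ℝ (fun q : ℝ × ℝ => u q.1 q.2) (t, y) (1, 0) + c (u t y) * fderiv ℝ (fun q : ℝ × ℝ => u q.1 q.2) (t, y) (0, 1)) ^ 2) := by
      filter_upwards [hmemX] with y hy
      rw [hR t y, hpd1u t y hy, hpd2u t y hy]
    show deriv (fun y => c (u t y) * R t y ^ 2) x = _
    rw [heq.deriv_eq]
    simpa [Pi.mul_def, Pi.add_def, Pi.sub_def, Pi.pow_def] using (hXc.mul ((hX1.add (hXc.mul hX2)).pow 2)).deriv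
  have E5 : pd1 (fun s y => S s y ^ 2) t x
      = 2 * (fderiv ℝ (fun q : ℝ × ℝ => u q.1 q.2) (t, x) (1, 0) - c (u t x) * fderiv ℝ (fun q : ℝ × ℝ => u q.1 q.2) (t, x) (0, 1)) * (fderiv ℝ (fderiv ℝ (fun q : ℝ × ℝ => u q.1 q.2)) (t, x) (1, 0) (1, 0) - (deriv c (u t x) * fderiv ℝ (fun q : ℝ × ℝ => u q.1 q.2) (t, x) (1, 0) * fderiv ℝ (fun q : ℝ × ℝ => u q.1 q.2) (t, x) (0, 1) + c (u t x) * fderiv ℝ (fderiv ℝ (fun q : ℝ × ℝ => u q.1 q.2)) (t, x) (1, 0) (0, 1))) := by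
    have heq : (fun s => S s x ^ 2) =ᶠ[𝓝 t]
        (fun s => (fderiv ℝ (fun q : ℝ × ℝ => u q.1 q.2) (s, x) (1, 0) - c (u s x) * fderiv ℝ (fun q : ℝ × ℝ => u q.1 q.2) (s, x) (0, 1)) ^ 2) := by
      filter_upwards [hmemT] with s hs
      rw [hS s x, hpd1u s x hs, hpd2u s x hs]
    show deriv (fun s => S s x ^ 2) t = _
    rw [heq.deriv_eq]
    simpa [Pi.mul_def, Pi.add_def, Pi.sub_def, Pi.pow_def] using ((hT1.sub (hTc.mul hT2)).pow 2).deriv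
  have E6 : pd2 (fun s y => c (u s y) * S s y ^ 2) t x
      = deriv c (u t x) * fderiv ℝ (fun q : ℝ × ℝ => u q.1 q.2) (t, x) (0, 1) * (fderiv ℝ (fun q : ℝ × ℝ => u q.1 q.2) (t, x) (1, 0) - c (u t x) * fderiv ℝ (fun q : ℝ × ℝ => u q.1 q.2) (t, x) (0, 1)) ^ 2
        + c (u t x) * (2 * (fderiv ℝ (fun q : ℝ × ℝ => u q.1 q.2) (t, x) (1, 0) - c (u t x) * fderiv ℝ (fun q : ℝ × ℝ => u q.1 q.2) (t, x) (0, 1)) * (fderiv ℝ (fderiv ℝ (fun q : ℝ × ℝ => u q.1 q.2)) (t, x) (0, 1) (1, 0) - (deriv c (u t x) * fderiv ℝ (fun q : ℝ × ℝ => u q.1 q.2) (t, x) (0, 1) * fderiv ℝ (fun q : ℝ × ℝ => u q.1 q.2) (t, x) (0, 1) + c (u t x) * fderiv ℝ (fderiv ℝ (fun q : ℝ × ℝ => u q.1 q.2)) (t, x) (0, 1) (0, 1)))) := by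
    have heq : (fun y => c (u t y) * S t y ^ 2) =ᶠ[𝓝 x]
        (fun y => c (u t y) *
          (fderiv ℝ (fun q : ℝ × ℝ => u q.1 q.2) (t, y) (1, 0) - c (u t y) * fderiv ℝ (fun q : ℝ × ℝ => u q.1 q.2) (t, y) (0, 1)) ^ 2) := by
      filter_upwards [hmemX] with y hy
      rw [hS t y, hpd1u t y hy, hpd2u t y hy]
    show deriv (fun y => c (u t y) * S t y ^ 2) x = _
    rw [heq.deriv_eq]
    simpa [Pi.mul_def, Pi.add_def, Pi.sub_def, Pi.pow_def] using (hXc.mul ((hX1.sub (hXc.mul hX2)).pow 2)).deriv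
  have key1 : pd1 (fun s y => R s y ^ 2) t x - pd2 (fun s y => c (u s y) * R s y ^ 2) t x
      = deriv c (u t x) * fderiv ℝ (fun q : ℝ × ℝ => u q.1 q.2) (t, x) (0, 1) * ((fderiv ℝ (fun q : ℝ × ℝ => u q.1 q.2) (t, x) (1, 0) + c (u t x) * fderiv ℝ (fun q : ℝ × ℝ => u q.1 q.2) (t, x) (0, 1)) * (fderiv ℝ (fun q : ℝ × ℝ => u q.1 q.2) (t, x) (1, 0) - c (u t x) * fderiv ℝ (fun q : ℝ × ℝ => u q.1 q.2) (t, x) (0, 1))) := by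
    rw [E3, E4, hsym]
    linear_combination (2 * (fderiv ℝ (fun q : ℝ × ℝ => u q.1 q.2) (t, x) (1, 0) + c (u t x) * fderiv ℝ (fun q : ℝ × ℝ => u q.1 q.2) (t, x) (0, 1))) * hpdeq
  have key2 : pd1 (fun s y => S s y ^ 2) t x + pd2 (fun s y => c (u s y) * S s y ^ 2) t x
      = -(deriv c (u t x) * fderiv ℝ (fun q : ℝ × ℝ => u q.1 q.2) (t, x) (0, 1) * ((fderiv ℝ (fun q : ℝ × ℝ => u q.1 q.2) (t, x) (1, 0) + c (u t x) * fderiv ℝ (fun q : ℝ × ℝ => u q.1 q.2) (t, x) (0, 1)) * (fderiv ℝ (fun q : ℝ × ℝ => u q.1 q.2) (t, x) (1, 0) - c (u t x) * fderiv ℝ (fun q : ℝ × ℝ => u q.1 q.2) (t, x) (0, 1)))) := by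
    rw [E5, E6, hsym]
    linear_combination (2 * (fderiv ℝ (fun q : ℝ × ℝ => u q.1 q.2) (t, x) (1, 0) - c (u t x) * fderiv ℝ (fun q : ℝ × ℝ => u q.1 q.2) (t, x) (0, 1))) * hpdeq
  rw [hR t x, hS t x, hpd1u t x hp, hpd2u t x hp]
  constructor
  · rw [key1]
    field_simp
    ring
  · rw [key2]
    field_simp
    ring
end

section
/- Let c : ℝ → ℝ be a smooth function with κ⁻¹ ≤ c(u) ≤ κ for all u ∈ ℝ, for some κ > 1. Let u, R, S be smooth functions on an open set Ω ⊂ ℝ² such that S = u_t − c(u)uₓ on Ω and R, S satisfy the system R_t − c(u) R_x = (c'(u)/(4c(u)))(R² − S²), S_t + c(u) S_x = (c'(u)/(4c(u)))(S² − R²). Then the function F := R − S − 2c(u)uₓ satisfies the linear homogeneous transport equation F_t − c(u) F_x = (c'(u)/(2c(u)))(R + S + 2c(u)uₓ) F on Ω. -/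
open Real Topology Filter

lemma slice1_hasDerivAt {E : Type*} [NormedAddCommGroup E] [NormedSpace ℝ E]
    {f : ℝ × ℝ → E} {f' : ℝ × ℝ →L[ℝ] E} {t x : ℝ}
    (h : HasFDerivAt f f' (t, x)) :
    HasDerivAt (fun s => f (s, x)) (f' (1, 0)) t := by
  have hl : HasDerivAt (fun s : ℝ => ((s : ℝ), x)) (1, 0) t :=
    HasDerivAt.prodMk (hasDerivAt_id t) (hasDerivAt_const t x)
  exact h.comp_hasDerivAt t hl

lemma slice2_hasDerivAt {E : Type*} [NormedAddCommGroup E] [NormedSpace ℝ E]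
    {f : ℝ × ℝ → E} {f' : ℝ × ℝ →L[ℝ] E} {t x : ℝ}
    (h : HasFDerivAt f f' (t, x)) :
    HasDerivAt (fun y => f (t, y)) (f' (0, 1)) x := by
  have hl : HasDerivAt (fun y : ℝ => (t, (y : ℝ))) (0, 1) x :=
    HasDerivAt.prodMk (hasDerivAt_const x t) (hasDerivAt_id x)
  exact h.comp_hasDerivAt x hl

/-- if smooth `u, R, S` on an open set `Ω` satisfy `S = u_t - c(u)u_x`
and the first-order system, then `F = R - S - 2c(u)u_x` satisfies the linear
transport equation `F_t - c(u) F_x = (c'/(2c))(R + S + 2c(u)u_x) F` on `Ω`. -/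
theorem stmt8
    (c : ℝ → ℝ) (κ : ℝ) (hκ : 1 < κ) (hc : ContDiff ℝ (⊤ : ℕ∞) c)
    (hcb : ∀ v : ℝ, κ⁻¹ ≤ c v ∧ c v ≤ κ)
    (Ω : Set (ℝ × ℝ)) (hΩ : IsOpen Ω)
    (u R S : ℝ → ℝ → ℝ)
    (hu : ContDiffOn ℝ (⊤ : ℕ∞) (fun pt : ℝ × ℝ => u pt.1 pt.2) Ω)
    (hRsm : ContDiffOn ℝ (⊤ : ℕ∞) (fun pt : ℝ × ℝ => R pt.1 pt.2) Ω)
    (hSsm : ContDiffOn ℝ (⊤ : ℕ∞) (fun pt : ℝ × ℝ => S pt.1 pt.2) Ω)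
    (hS : ∀ t x : ℝ, (t, x) ∈ Ω → S t x = pd1 u t x - c (u t x) * pd2 u t x)
    (hsysR : ∀ t x : ℝ, (t, x) ∈ Ω → pd1 R t x - c (u t x) * pd2 R t x
        = deriv c (u t x) / (4 * c (u t x)) * (R t x ^ 2 - S t x ^ 2))
    (hsysS : ∀ t x : ℝ, (t, x) ∈ Ω → pd1 S t x + c (u t x) * pd2 S t x
        = deriv c (u t x) / (4 * c (u t x)) * (S t x ^ 2 - R t x ^ 2))
    (F : ℝ → ℝ → ℝ)
    (hF : ∀ t x : ℝ, F t x = R t x - S t x - 2 * c (u t x) * pd2 u t x) :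
    ∀ t x : ℝ, (t, x) ∈ Ω →
      pd1 F t x - c (u t x) * pd2 F t x
        = deriv c (u t x) / (2 * c (u t x))
            * (R t x + S t x + 2 * c (u t x) * pd2 u t x) * F t x := by
  intro t x hp
  have hmem : Ω ∈ 𝓝 (t, x) := hΩ.mem_nhds hp
  have hcd : Differentiable ℝ c := hc.differentiable (by simp)
  set U : ℝ × ℝ → ℝ := fun q => u q.1 q.2 with hUdef
  have hUΩ : ∀ q ∈ Ω, HasFDerivAt U (fderiv ℝ U q) q := fun q hq =>
    ((hu.contDiffAt (hΩ.mem_nhds hq)).differentiableAt (by simp)).hasFDerivAt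
  have hpd1u : ∀ s y : ℝ, (s, y) ∈ Ω → pd1 u s y = fderiv ℝ U (s, y) (1, 0) :=
    fun s y hq => (slice1_hasDerivAt (hUΩ _ hq)).deriv
  have hpd2u : ∀ s y : ℝ, (s, y) ∈ Ω → pd2 u s y = fderiv ℝ U (s, y) (0, 1) :=
    fun s y hq => (slice2_hasDerivAt (hUΩ _ hq)).deriv
  have hUat : ContDiffAt ℝ (⊤ : ℕ∞) U (t, x) := hu.contDiffAt hmem
  have hU3 : ContDiffAt ℝ 3 U (t, x) := hUat.of_le (WithTop.coe_le_coe.mpr le_top)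
  have hΦ : ContDiffAt ℝ 2 (fderiv ℝ U) (t, x) := hU3.fderiv_right (by norm_num)
  have hΦd : DifferentiableAt ℝ (fderiv ℝ U) (t, x) := hΦ.differentiableAt (by norm_num)
  set Φ' := fderiv ℝ (fderiv ℝ U) (t, x) with hΦ'def
  have hΦfd : HasFDerivAt (fderiv ℝ U) Φ' (t, x) := hΦd.hasFDerivAt
  have hsymm : Φ' (0, 1) (1, 0) = Φ' (1, 0) (0, 1) :=
    (hUat.isSymmSndFDerivAt (by rw [minSmoothness_of_isRCLikeNormedField]; exact WithTop.coe_le_coe.mpr le_top)) _ _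
  have E1 : ∀ᶠ s in 𝓝 t, (s, x) ∈ Ω :=
    (Continuous.continuousAt (by fun_prop : Continuous fun s : ℝ => ((s : ℝ), x))).preimage_mem_nhds hmem
  have E2 : ∀ᶠ y in 𝓝 x, (t, y) ∈ Ω :=
    (Continuous.continuousAt (by fun_prop : Continuous fun y : ℝ => (t, (y : ℝ)))).preimage_mem_nhds hmem
  -- second order slice derivatives of pd1 u / pd2 u
  have hΦt : HasDerivAt (fun s => fderiv ℝ U (s, x)) (Φ' (1, 0)) t := slice1_hasDerivAt hΦfd
  have hΦx : HasDerivAt (fun y => fderiv ℝ U (t, y)) (Φ' (0, 1)) x := slice2_hasDerivAt hΦfd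
  have key : ∀ w : ℝ × ℝ,
      HasDerivAt (fun s => fderiv ℝ U (s, x) w) (Φ' (1, 0) w) t ∧
      HasDerivAt (fun y => fderiv ℝ U (t, y) w) (Φ' (0, 1) w) x := by
    intro w
    constructor
    · simpa using hΦt.clm_apply (hasDerivAt_const t w)
    · simpa using hΦx.clm_apply (hasDerivAt_const x w)
  have hpd1u_t : HasDerivAt (fun s => pd1 u s x) (Φ' (1, 0) (1, 0)) t := by
    refine ((key (1, 0)).1).congr_of_eventuallyEq ?_
    filter_upwards [E1] with s hs using hpd1u s x hs
  have hpd2u_t : HasDerivAt (fun s => pd2 u s x) (Φ' (1, 0) (0, 1)) t := by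
    refine ((key (0, 1)).1).congr_of_eventuallyEq ?_
    filter_upwards [E1] with s hs using hpd2u s x hs
  have hpd1u_x : HasDerivAt (fun y => pd1 u t y) (Φ' (0, 1) (1, 0)) x := by
    refine ((key (1, 0)).2).congr_of_eventuallyEq ?_
    filter_upwards [E2] with y hy using hpd1u t y hy
  have hpd2u_x : HasDerivAt (fun y => pd2 u t y) (Φ' (0, 1) (0, 1)) x := by
    refine ((key (0, 1)).2).congr_of_eventuallyEq ?_
    filter_upwards [E2] with y hy using hpd2u t y hy
  -- first order slices of u with pd values
  have hUp : HasFDerivAt U (fderiv ℝ U (t, x)) (t, x) := hUΩ _ hp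
  have hu_t : HasDerivAt (fun s => u s x) (pd1 u t x) t :=
    (slice1_hasDerivAt hUp).differentiableAt.hasDerivAt
  have hu_x : HasDerivAt (fun y => u t y) (pd2 u t x) x :=
    (slice2_hasDerivAt hUp).differentiableAt.hasDerivAt
  -- c ∘ u slices
  have hcderiv : HasDerivAt c (deriv c (u t x)) (u t x) := (hcd (u t x)).hasDerivAt
  have hcu_t : HasDerivAt (fun s => c (u s x)) (deriv c (u t x) * pd1 u t x) t :=
    hcderiv.comp t hu_t
  have hcu_x : HasDerivAt (fun y => c (u t y)) (deriv c (u t x) * pd2 u t x) x :=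
    hcderiv.comp x hu_x
  -- S slices via the identity S = u_t - c(u) u_x
  have hS_t : HasDerivAt (fun s => S s x)
      (Φ' (1, 0) (1, 0) - (deriv c (u t x) * pd1 u t x * pd2 u t x
        + c (u t x) * (Φ' (1, 0) (0, 1)))) t := by
    refine (hpd1u_t.sub (hcu_t.mul hpd2u_t)).congr_of_eventuallyEq ?_
    filter_upwards [E1] with s hs using hS s x hs
  have hS_x : HasDerivAt (fun y => S t y)
      (Φ' (0, 1) (1, 0) - (deriv c (u t x) * pd2 u t x * pd2 u t x
        + c (u t x) * (Φ' (0, 1) (0, 1)))) x := by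
    refine (hpd1u_x.sub (hcu_x.mul hpd2u_x)).congr_of_eventuallyEq ?_
    filter_upwards [E2] with y hy using hS t y hy
  -- R slices
  have hRp : HasFDerivAt (fun q : ℝ × ℝ => R q.1 q.2)
      (fderiv ℝ (fun q : ℝ × ℝ => R q.1 q.2) (t, x)) (t, x) :=
    ((hRsm.contDiffAt hmem).differentiableAt (by simp)).hasFDerivAt
  have hR_t : HasDerivAt (fun s => R s x) (pd1 R t x) t :=
    (slice1_hasDerivAt hRp).differentiableAt.hasDerivAt
  have hR_x : HasDerivAt (fun y => R t y) (pd2 R t x) x :=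
    (slice2_hasDerivAt hRp).differentiableAt.hasDerivAt
  -- F slices via F = R + S - 2 u_t on Ω
  have hFeq : ∀ s y : ℝ, (s, y) ∈ Ω → F s y = R s y + S s y - 2 * pd1 u s y := by
    intro s y hq
    rw [hF s y, hS s y hq]
    ring
  have hF_t : HasDerivAt (fun s => F s x)
      (pd1 R t x + (Φ' (1, 0) (1, 0) - (deriv c (u t x) * pd1 u t x * pd2 u t x
        + c (u t x) * (Φ' (1, 0) (0, 1)))) - 2 * Φ' (1, 0) (1, 0)) t := by
    refine ((hR_t.add hS_t).sub (hpd1u_t.const_mul (2 : ℝ))).congr_of_eventuallyEq ?_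
    filter_upwards [E1] with s hs using hFeq s x hs
  have hF_x : HasDerivAt (fun y => F t y)
      (pd2 R t x + (Φ' (0, 1) (1, 0) - (deriv c (u t x) * pd2 u t x * pd2 u t x
        + c (u t x) * (Φ' (0, 1) (0, 1)))) - 2 * Φ' (0, 1) (1, 0)) x := by
    refine ((hR_x.add hS_x).sub (hpd1u_x.const_mul (2 : ℝ))).congr_of_eventuallyEq ?_
    filter_upwards [E2] with y hy using hFeq t y hy
  -- turn into scalar equations
  have hpf1 : pd1 F t x = pd1 R t x + (Φ' (1, 0) (1, 0)
      - (deriv c (u t x) * pd1 u t x * pd2 u t x + c (u t x) * (Φ' (1, 0) (0, 1))))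
      - 2 * Φ' (1, 0) (1, 0) := hF_t.deriv
  have hpf2 : pd2 F t x = pd2 R t x + (Φ' (0, 1) (1, 0)
      - (deriv c (u t x) * pd2 u t x * pd2 u t x + c (u t x) * (Φ' (0, 1) (0, 1))))
      - 2 * Φ' (0, 1) (1, 0) := hF_x.deriv
  have hpdS1 : pd1 S t x = Φ' (1, 0) (1, 0) - (deriv c (u t x) * pd1 u t x * pd2 u t x
      + c (u t x) * (Φ' (1, 0) (0, 1))) := hS_t.deriv
  have hpdS2 : pd2 S t x = Φ' (0, 1) (1, 0) - (deriv c (u t x) * pd2 u t x * pd2 u t x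
      + c (u t x) * (Φ' (0, 1) (0, 1))) := hS_x.deriv
  have ha : c (u t x) ≠ 0 := by
    have h1 := (hcb (u t x)).1
    have h2 : (0 : ℝ) < κ⁻¹ := by positivity
    linarith
  have hEa := hsysR t x hp
  have hEb := hsysS t x hp
  have hEc := hS t x hp
  rw [hpdS1, hpdS2] at hEb
  rw [hpf1, hpf2, hF t x, hsymm] at *
  have hinv : c (u t x) * (c (u t x))⁻¹ = 1 := mul_inv_cancel₀ ha
  linear_combination hEa - hEb + 2 * deriv c (u t x) * pd2 u t x * hEc
    + (2 * deriv c (u t x) * pd2 u t x * (S t x + c (u t x) * pd2 u t x)) * hinv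
end

section
/- Let c : ℝ → ℝ be a smooth function with κ⁻¹ ≤ c(u) ≤ κ for all u ∈ ℝ, for some κ > 1. Let (u,w,z,p,q) be continuously differentiable functions on an open set Ω ⊂ ℝ² (variables (X,Y)) satisfying the semilinear system (S). Then on Ω one has the conservation laws ∂_X q + ∂_Y p = 0 and ∂_X (q/c(u)) − ∂_Y (p/c(u)) = 0. -/
open Real

/-- Partial derivative in the first variable (`X`). -/
noncomputable def pdX (f : ℝ → ℝ → ℝ) (X Y : ℝ) : ℝ := deriv (fun X' => f X' Y) X

/-- Partial derivative in the second variable (`Y`). -/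
noncomputable def pdY (f : ℝ → ℝ → ℝ) (X Y : ℝ) : ℝ := deriv (fun Y' => f X Y') Y

/-- The semilinear system (S) of the paper, in the variables `(X,Y)`,
for the functions `(u, w, z, p, q)`. -/
def SysS (c : ℝ → ℝ) (Ω : Set (ℝ × ℝ)) (u w z p q : ℝ → ℝ → ℝ) : Prop :=
  ∀ X Y : ℝ, (X, Y) ∈ Ω →
    pdY w X Y = deriv c (u X Y) / (8 * c (u X Y) ^ 2)
        * (Real.cos (z X Y) - Real.cos (w X Y)) * q X Y
    ∧ pdX z X Y = deriv c (u X Y) / (8 * c (u X Y) ^ 2)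
        * (Real.cos (w X Y) - Real.cos (z X Y)) * p X Y
    ∧ pdY p X Y = deriv c (u X Y) / (8 * c (u X Y) ^ 2)
        * (Real.sin (z X Y) - Real.sin (w X Y)) * (p X Y * q X Y)
    ∧ pdX q X Y = deriv c (u X Y) / (8 * c (u X Y) ^ 2)
        * (Real.sin (w X Y) - Real.sin (z X Y)) * (p X Y * q X Y)
    ∧ pdX u X Y = Real.sin (w X Y) / (4 * c (u X Y)) * p X Y
    ∧ pdY u X Y = Real.sin (z X Y) / (4 * c (u X Y)) * q X Y

lemma slice1 {f : ℝ → ℝ → ℝ} {Ω : Set (ℝ × ℝ)} (hΩ : IsOpen Ω)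
    (hf : ContDiffOn ℝ 1 (fun pt : ℝ × ℝ => f pt.1 pt.2) Ω)
    {X Y : ℝ} (h : (X, Y) ∈ Ω) :
    DifferentiableAt ℝ (fun x => f x Y) X := by
  have h1 : DifferentiableAt ℝ (fun pt : ℝ × ℝ => f pt.1 pt.2) (X, Y) :=
    (hf.differentiableOn one_ne_zero).differentiableAt (hΩ.mem_nhds h)
  exact h1.comp X (DifferentiableAt.prodMk (differentiableAt_id : DifferentiableAt ℝ id X) (differentiableAt_const Y))

lemma slice2 {f : ℝ → ℝ → ℝ} {Ω : Set (ℝ × ℝ)} (hΩ : IsOpen Ω)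
    (hf : ContDiffOn ℝ 1 (fun pt : ℝ × ℝ => f pt.1 pt.2) Ω)
    {X Y : ℝ} (h : (X, Y) ∈ Ω) :
    DifferentiableAt ℝ (fun y => f X y) Y := by
  have h1 : DifferentiableAt ℝ (fun pt : ℝ × ℝ => f pt.1 pt.2) (X, Y) :=
    (hf.differentiableOn one_ne_zero).differentiableAt (hΩ.mem_nhds h)
  exact h1.comp Y (DifferentiableAt.prodMk (differentiableAt_const X) differentiableAt_id)

/-- for a `C¹` solution of the system (S) on an open set `Ω`,
one has the conservation laws `q_X + p_Y = 0` and `(q/c)_X - (p/c)_Y = 0`. -/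
theorem stmt11
    (c : ℝ → ℝ) (κ : ℝ) (hκ : 1 < κ) (hc : ContDiff ℝ (⊤ : ℕ∞) c)
    (hcb : ∀ v : ℝ, κ⁻¹ ≤ c v ∧ c v ≤ κ)
    (Ω : Set (ℝ × ℝ)) (hΩ : IsOpen Ω)
    (u w z p q : ℝ → ℝ → ℝ)
    (hu : ContDiffOn ℝ 1 (fun pt : ℝ × ℝ => u pt.1 pt.2) Ω)
    (hw : ContDiffOn ℝ 1 (fun pt : ℝ × ℝ => w pt.1 pt.2) Ω)
    (hz : ContDiffOn ℝ 1 (fun pt : ℝ × ℝ => z pt.1 pt.2) Ω)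
    (hp : ContDiffOn ℝ 1 (fun pt : ℝ × ℝ => p pt.1 pt.2) Ω)
    (hq : ContDiffOn ℝ 1 (fun pt : ℝ × ℝ => q pt.1 pt.2) Ω)
    (hsys : SysS c Ω u w z p q) :
    ∀ X Y : ℝ, (X, Y) ∈ Ω →
      pdX q X Y + pdY p X Y = 0
      ∧ pdX (fun a b => q a b / c (u a b)) X Y
          - pdY (fun a b => p a b / c (u a b)) X Y = 0 := by
  intro X Y hXY
  obtain ⟨hw1, hz1, hp1, hq1, hu1, hu2⟩ := hsys X Y hXY
  have hcne : c (u X Y) ≠ 0 := by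
    have h1 := (hcb (u X Y)).1
    have hκ0 : (0:ℝ) < κ⁻¹ := inv_pos.mpr (lt_trans one_pos hκ)
    linarith
  refine ⟨by rw [hq1, hp1]; ring, ?_⟩
  have hqX := slice1 hΩ hq hXY
  have huX := slice1 hΩ hu hXY
  have hpY := slice2 hΩ hp hXY
  have huY := slice2 hΩ hu hXY
  have hcd : Differentiable ℝ c := hc.differentiable (by simp)
  have hcuX : DifferentiableAt ℝ (fun x => c (u x Y)) X := (hcd _).comp X huX
  have hcuY : DifferentiableAt ℝ (fun y => c (u X y)) Y := (hcd _).comp Y huY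
  have dX : deriv (fun x => c (u x Y)) X = deriv c (u X Y) * deriv (fun x => u x Y) X :=
    deriv_comp X (hcd _) huX
  have dY : deriv (fun y => c (u X y)) Y = deriv c (u X Y) * deriv (fun y => u X y) Y :=
    deriv_comp Y (hcd _) huY
  have e1 : pdX (fun a b => q a b / c (u a b)) X Y
      = (pdX q X Y * c (u X Y) - q X Y * (deriv c (u X Y) * pdX u X Y)) / (c (u X Y))^2 := by
    show deriv (fun x => q x Y / c (u x Y)) X = _
    rw [deriv_fun_div hqX hcuX hcne, dX]
    rfl
  have e2 : pdY (fun a b => p a b / c (u a b)) X Y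
      = (pdY p X Y * c (u X Y) - p X Y * (deriv c (u X Y) * pdY u X Y)) / (c (u X Y))^2 := by
    show deriv (fun y => p X y / c (u X y)) Y = _
    rw [deriv_fun_div hpY hcuY hcne, dY]
    rfl
  rw [e1, e2, hq1, hp1, hu1, hu2]
  field_simp
  ring
end

section
/- Let c : ℝ → ℝ be a smooth function with κ⁻¹ ≤ c(u) ≤ κ for all u ∈ ℝ, for some κ > 1. Let (u,w,z,p,q) be continuously differentiable functions on an open set Ω ⊂ ℝ² (variables (X,Y)) satisfying the semilinear system (S). Then on Ω: ∂_Y[(1 − cos w) p / 8] = (c'(u) p q/(64 c²(u))) [sin z (1 − cos w) − sin w (1 − cos z)] = −∂_X[(1 − cos z) q / 8]; in particular the 1-form ((1 − cos w)p/8) dX − ((1 − cos z)q/8) dY is closed. -/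
open Real

lemma sliceY_diff {f : ℝ → ℝ → ℝ} {Ω : Set (ℝ × ℝ)} (hΩ : IsOpen Ω)
    (hf : ContDiffOn ℝ 1 (fun pt : ℝ × ℝ => f pt.1 pt.2) Ω) {X Y : ℝ}
    (h : (X, Y) ∈ Ω) : DifferentiableAt ℝ (fun Y' => f X Y') Y := by
  have h2 : DifferentiableAt ℝ (fun pt : ℝ × ℝ => f pt.1 pt.2) (X, Y) :=
    (hf.contDiffAt (hΩ.mem_nhds h)).differentiableAt one_ne_zero
  exact h2.comp Y ((differentiableAt_const X).prodMk differentiableAt_id)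

lemma sliceX_diff {f : ℝ → ℝ → ℝ} {Ω : Set (ℝ × ℝ)} (hΩ : IsOpen Ω)
    (hf : ContDiffOn ℝ 1 (fun pt : ℝ × ℝ => f pt.1 pt.2) Ω) {X Y : ℝ}
    (h : (X, Y) ∈ Ω) : DifferentiableAt ℝ (fun X' => f X' Y) X := by
  have h2 : DifferentiableAt ℝ (fun pt : ℝ × ℝ => f pt.1 pt.2) (X, Y) :=
    (hf.contDiffAt (hΩ.mem_nhds h)).differentiableAt one_ne_zero
  exact h2.comp X (differentiableAt_id.prodMk (differentiableAt_const Y) : DifferentiableAt ℝ (fun X' : ℝ => (X', Y)) X)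

/-- for a `C¹` solution of the system (S) on an open set `Ω`,
`∂_Y[(1 - cos w)p/8] = (c' p q/(64c²))[sin z (1 - cos w) - sin w (1 - cos z)]
 = -∂_X[(1 - cos z)q/8]`, i.e. the 1-form `((1-cos w)p/8)dX - ((1-cos z)q/8)dY`
is closed. -/
theorem stmt14
    (c : ℝ → ℝ) (κ : ℝ) (hκ : 1 < κ) (hc : ContDiff ℝ (⊤ : ℕ∞) c)
    (hcb : ∀ v : ℝ, κ⁻¹ ≤ c v ∧ c v ≤ κ)
    (Ω : Set (ℝ × ℝ)) (hΩ : IsOpen Ω)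
    (u w z p q : ℝ → ℝ → ℝ)
    (hu : ContDiffOn ℝ 1 (fun pt : ℝ × ℝ => u pt.1 pt.2) Ω)
    (hw : ContDiffOn ℝ 1 (fun pt : ℝ × ℝ => w pt.1 pt.2) Ω)
    (hz : ContDiffOn ℝ 1 (fun pt : ℝ × ℝ => z pt.1 pt.2) Ω)
    (hp : ContDiffOn ℝ 1 (fun pt : ℝ × ℝ => p pt.1 pt.2) Ω)
    (hq : ContDiffOn ℝ 1 (fun pt : ℝ × ℝ => q pt.1 pt.2) Ω)
    (hsys : SysS c Ω u w z p q) :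
    ∀ X Y : ℝ, (X, Y) ∈ Ω →
      pdY (fun a b => (1 - Real.cos (w a b)) * p a b / 8) X Y
          = deriv c (u X Y) * (p X Y * q X Y) / (64 * c (u X Y) ^ 2)
              * (Real.sin (z X Y) * (1 - Real.cos (w X Y))
                  - Real.sin (w X Y) * (1 - Real.cos (z X Y)))
      ∧ pdY (fun a b => (1 - Real.cos (w a b)) * p a b / 8) X Y
          = - pdX (fun a b => (1 - Real.cos (z a b)) * q a b / 8) X Y := by
  intro X Y hmem
  obtain ⟨hwY, hzX, hpY, hqX, -, -⟩ := hsys X Y hmem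
  have hw' : HasDerivAt (fun Y' => w X Y') (pdY w X Y) Y :=
    (sliceY_diff hΩ hw hmem).hasDerivAt
  have hp' : HasDerivAt (fun Y' => p X Y') (pdY p X Y) Y :=
    (sliceY_diff hΩ hp hmem).hasDerivAt
  have hz' : HasDerivAt (fun X' => z X' Y) (pdX z X Y) X :=
    (sliceX_diff hΩ hz hmem).hasDerivAt
  have hq' : HasDerivAt (fun X' => q X' Y) (pdX q X Y) X :=
    (sliceX_diff hΩ hq hmem).hasDerivAt
  have H1 : HasDerivAt (fun Y' => (1 - Real.cos (w X Y')) * p X Y' / 8)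
      (((0 - (-Real.sin (w X Y) * pdY w X Y)) * p X Y
        + (1 - Real.cos (w X Y)) * pdY p X Y) / 8) Y :=
    (((hasDerivAt_const Y (1 : ℝ)).sub hw'.cos).mul hp').div_const 8
  have H2 : HasDerivAt (fun X' => (1 - Real.cos (z X' Y)) * q X' Y / 8)
      (((0 - (-Real.sin (z X Y) * pdX z X Y)) * q X Y
        + (1 - Real.cos (z X Y)) * pdX q X Y) / 8) X :=
    (((hasDerivAt_const X (1 : ℝ)).sub hz'.cos).mul hq').div_const 8
  have e1 : pdY (fun a b => (1 - Real.cos (w a b)) * p a b / 8) X Y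
      = ((0 - (-Real.sin (w X Y) * pdY w X Y)) * p X Y
        + (1 - Real.cos (w X Y)) * pdY p X Y) / 8 := H1.deriv
  have e2 : pdX (fun a b => (1 - Real.cos (z a b)) * q a b / 8) X Y
      = ((0 - (-Real.sin (z X Y) * pdX z X Y)) * q X Y
        + (1 - Real.cos (z X Y)) * pdX q X Y) / 8 := H2.deriv
  have hcne : c (u X Y) ≠ 0 := by
    have := (hcb (u X Y)).1
    have hκ0 : (0:ℝ) < κ⁻¹ := inv_pos.mpr (by linarith)
    linarith
  rw [e1, e2, hwY, hpY, hzX, hqX]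
  constructor
  · field_simp
    ring
  · field_simp
    ring
end

section
/- Let c : ℝ → ℝ be a smooth function with κ⁻¹ ≤ c(u) ≤ κ for all u ∈ ℝ, for some κ > 1. Let (u,w,z,p,q) be continuously differentiable functions on an open set Ω ⊂ ℝ² (variables (X,Y)) satisfying the semilinear system (S). Then on Ω: ∂_Y[(1 − cos w) p / (8c(u))] = (c'(u) p q/(64 c³(u))) [sin(w + z) − sin w − sin z] = ∂_X[(1 − cos z) q / (8c(u))]; in particular the 1-form ((1 − cos w)p/(8c(u))) dX + ((1 − cos z)q/(8c(u))) dY is closed. -/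
open Real

/-- Slice differentiability in `Y`. -/
lemma sliceY (Ω : Set (ℝ × ℝ)) (hΩ : IsOpen Ω) (f : ℝ → ℝ → ℝ)
    (hf : ContDiffOn ℝ 1 (fun pt : ℝ × ℝ => f pt.1 pt.2) Ω) {X Y : ℝ} (h : (X, Y) ∈ Ω) :
    HasDerivAt (fun Y' => f X Y') (pdY f X Y) Y := by
  have hfd : DifferentiableAt ℝ (fun pt : ℝ × ℝ => f pt.1 pt.2) (X, Y) :=
    (hf.differentiableOn one_ne_zero).differentiableAt (hΩ.mem_nhds h)
  have hd : DifferentiableAt ℝ (fun Y' => f X Y') Y :=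
    hfd.comp Y ((differentiableAt_const X).prodMk differentiableAt_id)
  exact hd.hasDerivAt

/-- Slice differentiability in `X`. -/
lemma sliceX (Ω : Set (ℝ × ℝ)) (hΩ : IsOpen Ω) (f : ℝ → ℝ → ℝ)
    (hf : ContDiffOn ℝ 1 (fun pt : ℝ × ℝ => f pt.1 pt.2) Ω) {X Y : ℝ} (h : (X, Y) ∈ Ω) :
    HasDerivAt (fun X' => f X' Y) (pdX f X Y) X := by
  have hfd : DifferentiableAt ℝ (fun pt : ℝ × ℝ => f pt.1 pt.2) (X, Y) :=
    (hf.differentiableOn one_ne_zero).differentiableAt (hΩ.mem_nhds h)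
  have hd : DifferentiableAt ℝ (fun X' => f X' Y) X :=
    by have := hfd.comp X ((differentiableAt_fun_id : DifferentiableAt ℝ (fun x : ℝ => x) X).prodMk (differentiableAt_const Y)); exact this
  exact hd.hasDerivAt

/-- for a `C¹` solution of the system (S) on an open set `Ω`,
`∂_Y[(1 - cos w)p/(8c)] = (c' p q/(64c³))[sin(w+z) - sin w - sin z]
 = ∂_X[(1 - cos z)q/(8c)]`, i.e. the 1-form
`((1-cos w)p/(8c))dX + ((1-cos z)q/(8c))dY` is closed. -/
theorem stmt15
    (c : ℝ → ℝ) (κ : ℝ) (hκ : 1 < κ) (hc : ContDiff ℝ (⊤ : ℕ∞) c)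
    (hcb : ∀ v : ℝ, κ⁻¹ ≤ c v ∧ c v ≤ κ)
    (Ω : Set (ℝ × ℝ)) (hΩ : IsOpen Ω)
    (u w z p q : ℝ → ℝ → ℝ)
    (hu : ContDiffOn ℝ 1 (fun pt : ℝ × ℝ => u pt.1 pt.2) Ω)
    (hw : ContDiffOn ℝ 1 (fun pt : ℝ × ℝ => w pt.1 pt.2) Ω)
    (hz : ContDiffOn ℝ 1 (fun pt : ℝ × ℝ => z pt.1 pt.2) Ω)
    (hp : ContDiffOn ℝ 1 (fun pt : ℝ × ℝ => p pt.1 pt.2) Ω)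
    (hq : ContDiffOn ℝ 1 (fun pt : ℝ × ℝ => q pt.1 pt.2) Ω)
    (hsys : SysS c Ω u w z p q) :
    ∀ X Y : ℝ, (X, Y) ∈ Ω →
      pdY (fun a b => (1 - Real.cos (w a b)) * p a b / (8 * c (u a b))) X Y
          = deriv c (u X Y) * (p X Y * q X Y) / (64 * c (u X Y) ^ 3)
              * (Real.sin (w X Y + z X Y) - Real.sin (w X Y) - Real.sin (z X Y))
      ∧ pdY (fun a b => (1 - Real.cos (w a b)) * p a b / (8 * c (u a b))) X Y
          = pdX (fun a b => (1 - Real.cos (z a b)) * q a b / (8 * c (u a b))) X Y := by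
  intro X Y hXY
  obtain ⟨hw1, hz1, hp1, hq1, hu1, hu2⟩ := hsys X Y hXY
  have hcpos : 0 < c (u X Y) := lt_of_lt_of_le (by positivity) (hcb (u X Y)).1
  have hc0 : c (u X Y) ≠ 0 := ne_of_gt hcpos
  have hden : (8 : ℝ) * c (u X Y) ≠ 0 := by positivity
  have hcd : HasDerivAt c (deriv c (u X Y)) (u X Y) :=
    ((hc.differentiable (by simp)) (u X Y)).hasDerivAt
  -- Y-derivative of (1 - cos w) p / (8 c(u))
  have hW := sliceY Ω hΩ w hw hXY
  have hP := sliceY Ω hΩ p hp hXY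
  have hUY := sliceY Ω hΩ u hu hXY
  have hCUY : HasDerivAt (fun Y' => c (u X Y')) (deriv c (u X Y) * pdY u X Y) Y :=
    hcd.comp Y hUY
  have hnum : HasDerivAt (fun Y' => (1 - Real.cos (w X Y')) * p X Y')
      ((Real.sin (w X Y) * pdY w X Y) * p X Y + (1 - Real.cos (w X Y)) * pdY p X Y) Y := by
    have h1 : HasDerivAt (fun Y' => 1 - Real.cos (w X Y'))
        (Real.sin (w X Y) * pdY w X Y) Y := by
      have h2 := (Real.hasDerivAt_cos (w X Y)).comp Y hW
      have h3 := (hasDerivAt_const Y (1 : ℝ)).sub h2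
      exact h3.congr_deriv (by ring)
    exact h1.mul hP
  have hD : HasDerivAt (fun Y' => 8 * c (u X Y')) (8 * (deriv c (u X Y) * pdY u X Y)) Y :=
    hCUY.const_mul 8
  have hF := hnum.div hD hden
  have e1 : pdY (fun a b => (1 - Real.cos (w a b)) * p a b / (8 * c (u a b))) X Y
      = (((Real.sin (w X Y) * pdY w X Y) * p X Y + (1 - Real.cos (w X Y)) * pdY p X Y)
            * (8 * c (u X Y))
          - (1 - Real.cos (w X Y)) * p X Y * (8 * (deriv c (u X Y) * pdY u X Y)))
          / (8 * c (u X Y)) ^ 2 := hF.deriv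
  -- X-derivative of (1 - cos z) q / (8 c(u))
  have hZ := sliceX Ω hΩ z hz hXY
  have hQ := sliceX Ω hΩ q hq hXY
  have hUX := sliceX Ω hΩ u hu hXY
  have hCUX : HasDerivAt (fun X' => c (u X' Y)) (deriv c (u X Y) * pdX u X Y) X :=
    hcd.comp X hUX
  have hnum' : HasDerivAt (fun X' => (1 - Real.cos (z X' Y)) * q X' Y)
      ((Real.sin (z X Y) * pdX z X Y) * q X Y + (1 - Real.cos (z X Y)) * pdX q X Y) X := by
    have h1 : HasDerivAt (fun X' => 1 - Real.cos (z X' Y))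
        (Real.sin (z X Y) * pdX z X Y) X := by
      have h2 := (Real.hasDerivAt_cos (z X Y)).comp X hZ
      have h3 := (hasDerivAt_const X (1 : ℝ)).sub h2
      exact h3.congr_deriv (by ring)
    exact h1.mul hQ
  have hD' : HasDerivAt (fun X' => 8 * c (u X' Y)) (8 * (deriv c (u X Y) * pdX u X Y)) X :=
    hCUX.const_mul 8
  have hG := hnum'.div hD' hden
  have e2 : pdX (fun a b => (1 - Real.cos (z a b)) * q a b / (8 * c (u a b))) X Y
      = (((Real.sin (z X Y) * pdX z X Y) * q X Y + (1 - Real.cos (z X Y)) * pdX q X Y)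
            * (8 * c (u X Y))
          - (1 - Real.cos (z X Y)) * q X Y * (8 * (deriv c (u X Y) * pdX u X Y)))
          / (8 * c (u X Y)) ^ 2 := hG.deriv
  have key : pdY (fun a b => (1 - Real.cos (w a b)) * p a b / (8 * c (u a b))) X Y
      = deriv c (u X Y) * (p X Y * q X Y) / (64 * c (u X Y) ^ 3)
          * (Real.sin (w X Y + z X Y) - Real.sin (w X Y) - Real.sin (z X Y)) := by
    rw [e1, hw1, hp1, hu2, Real.sin_add]
    field_simp
    ring
  refine ⟨key, ?_⟩
  rw [key, e2, hz1, hq1, hu1, Real.sin_add]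
  field_simp
  ring
end

section
/- For every ε > 0 there exists a constant κ_ε > 0 such that for every pair of angles w, z ∈ ℝ: |sin z (1 − cos w) − sin w (1 − cos z)| ≤ κ_ε [(1 − cos w)(1 + cos z) + (1 − cos z)(1 + cos w)] + ε (1 − cos w)(1 − cos z). -/
open Real

lemma aux_sin_bound (ε x : ℝ) (hε : 0 < ε) :
    2 * ε * |Real.sin x| ≤ ε ^ 2 * (1 - Real.cos x) + (1 + Real.cos x) := by
  have hs : |Real.sin x| ^ 2 = (1 - Real.cos x) * (1 + Real.cos x) := by
    rw [sq_abs]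
    nlinarith [Real.sin_sq_add_cos_sq x]
  have hA : 0 ≤ ε ^ 2 * (1 - Real.cos x) + (1 + Real.cos x) := by
    nlinarith [Real.cos_le_one x, Real.neg_one_le_cos x, sq_nonneg ε]
  have hsq : (2 * ε * |Real.sin x|) ^ 2 ≤ (ε ^ 2 * (1 - Real.cos x) + (1 + Real.cos x)) ^ 2 := by
    nlinarith [hs, sq_nonneg (ε ^ 2 * (1 - Real.cos x) - (1 + Real.cos x))]
  have h := Real.sqrt_le_sqrt hsq
  rwa [Real.sqrt_sq (by positivity), Real.sqrt_sq hA] at h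

/-- for every `ε > 0` there is `κ_ε > 0` such that for all angles
`w, z`: `|sin z (1 - cos w) - sin w (1 - cos z)|
  ≤ κ_ε [(1 - cos w)(1 + cos z) + (1 - cos z)(1 + cos w)] + ε (1 - cos w)(1 - cos z)`. -/
theorem stmt19 :
    ∀ ε : ℝ, 0 < ε → ∃ κε : ℝ, 0 < κε ∧ ∀ w z : ℝ,
      |Real.sin z * (1 - Real.cos w) - Real.sin w * (1 - Real.cos z)|
        ≤ κε * ((1 - Real.cos w) * (1 + Real.cos z)
                  + (1 - Real.cos z) * (1 + Real.cos w))
          + ε * ((1 - Real.cos w) * (1 - Real.cos z)) := by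
  intro ε hε
  refine ⟨1 / (2 * ε), by positivity, fun w z => ?_⟩
  set a := 1 - Real.cos w with ha_def
  set b := 1 - Real.cos z with hb_def
  have ha : 0 ≤ a := by have := Real.cos_le_one w; simp [ha_def]; linarith
  have hb : 0 ≤ b := by have := Real.cos_le_one z; simp [hb_def]; linarith
  have h2ε : (0:ℝ) < 2 * ε := by linarith
  have htri : |Real.sin z * a - Real.sin w * b| ≤ |Real.sin z| * a + |Real.sin w| * b := by
    calc |Real.sin z * a - Real.sin w * b|
        ≤ |Real.sin z * a| + |Real.sin w * b| := abs_sub _ _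
      _ = |Real.sin z| * a + |Real.sin w| * b := by
          rw [abs_mul, abs_mul, abs_of_nonneg ha, abs_of_nonneg hb]
  have h1 := mul_le_mul_of_nonneg_right (aux_sin_bound ε z hε) ha
  rw [← hb_def] at h1
  have h2 := mul_le_mul_of_nonneg_right (aux_sin_bound ε w hε) hb
  rw [← ha_def] at h2
  have key : 2 * ε * |Real.sin z * a - Real.sin w * b|
      ≤ (a * (1 + Real.cos z) + b * (1 + Real.cos w)) + 2 * ε ^ 2 * (a * b) := by
    have htri' := mul_le_mul_of_nonneg_left htri h2ε.le
    linarith [htri', h1, h2]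
  calc |Real.sin z * a - Real.sin w * b|
      = 2 * ε * |Real.sin z * a - Real.sin w * b| / (2 * ε) := by field_simp
    _ ≤ ((a * (1 + Real.cos z) + b * (1 + Real.cos w)) + 2 * ε ^ 2 * (a * b)) / (2 * ε) := by
        gcongr
    _ = 1 / (2 * ε) * (a * (1 + Real.cos z) + b * (1 + Real.cos w)) + ε * (a * b) := by
        field_simp
end
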